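/- arXiv:2208.07933 — 5 statements merged into one kernel-verified Lean document; each statement's English description precedes it below -/
import Mathlib

section
/- Let 1 ≤ p < ∞. There exists a constant C > 0 depending only on d and p such that for every ε > 0, every h ∈ ℝ^d and every φ ∈ L^p(ℝ^d): the function e := E_ε(h)[φ] − φ vanishes outside the ball B_{(7/4)ε}(h) and satisfies ‖e‖_{L^p(ℝ^d)} ≤ C ‖φ‖_{L^p(B_{(7/4)ε}(h))}. -/
open MeasureTheory Metric Filter
open scoped ENNReal RealInnerProductSpace Topology

/-- The restriction operator `E_ε(h)[φ]` of the paper. -/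
noncomputable def Eop (d : ℕ) (H : ℝ → ℝ) (ε : ℝ) (h : EuclideanSpace ℝ (Fin d))
    (φ : EuclideanSpace ℝ (Fin d) → ℝ) (x : EuclideanSpace ℝ (Fin d)) : ℝ :=
  (⨍ y in closedBall h ε, φ y) * H (2 - ‖x - h‖ / ε) + φ x * H (‖x - h‖ / ε - 1)

/-- `L^p` error estimate: `e := E_ε(h)[φ] - φ` vanishes outside `B_{(7/4)ε}(h)` and
`‖e‖_{L^p} ≤ C ‖φ‖_{L^p(B_{(7/4)ε}(h))}` with `C` independent of `ε` and `h`. -/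
theorem stmt5 (d : ℕ) (hd : 2 ≤ d) (H : ℝ → ℝ) (hH : ContDiff ℝ (⊤ : ℕ∞) H)
    (hH01 : ∀ z : ℝ, 0 ≤ H z ∧ H z ≤ 1)
    (hH0 : ∀ z : ℝ, z ≤ 1/4 → H z = 0)
    (hH1 : ∀ z : ℝ, 3/4 ≤ z → H z = 1)
    (hHsym : ∀ z : ℝ, deriv H z = deriv H (1 - z))
    (p : ℝ≥0∞) (hp1 : 1 ≤ p) (hp2 : p ≠ ⊤) :
    ∃ C : ℝ, 0 < C ∧
      ∀ (ε : ℝ), 0 < ε → ∀ (h : EuclideanSpace ℝ (Fin d))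
        (φ : EuclideanSpace ℝ (Fin d) → ℝ), MemLp φ p volume →
        (∀ x, x ∉ closedBall h (7/4 * ε) → Eop d H ε h φ x - φ x = 0) ∧
        eLpNorm (fun x => Eop d H ε h φ x - φ x) p volume ≤
          ENNReal.ofReal C * eLpNorm φ p (volume.restrict (closedBall h (7/4 * ε))) := by
  set r : ℝ := (7/4 : ℝ) ^ d with hr_def
  have hr1 : (1:ℝ) ≤ r := one_le_pow₀ (by norm_num)
  refine ⟨r + 1, by linarith, ?_⟩
  intro ε hε h φ hφ
  have hεne : ε ≠ 0 := hε.ne'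
  -- distance computations
  have hdist : ∀ x : EuclideanSpace ℝ (Fin d), x ∉ closedBall h (7/4 * ε) →
      (7/4 : ℝ) < ‖x - h‖ / ε := by
    intro x hx
    rw [mem_closedBall, dist_eq_norm] at hx
    rw [lt_div_iff₀ hε]
    linarith [not_le.mp hx]
  have hvanish : ∀ x, x ∉ closedBall h (7/4 * ε) → Eop d H ε h φ x - φ x = 0 := by
    intro x hx
    have ht := hdist x hx
    have h1 : H (2 - ‖x - h‖ / ε) = 0 := hH0 _ (by linarith)
    have h2 : H (‖x - h‖ / ε - 1) = 1 := hH1 _ (by linarith)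
    simp [Eop, h1, h2]
  refine ⟨hvanish, ?_⟩
  -- notation
  set B : Set (EuclideanSpace ℝ (Fin d)) := closedBall h ε with hB_def
  set B' : Set (EuclideanSpace ℝ (Fin d)) := closedBall h (7/4 * ε) with hB'_def
  have hBsub : B ⊆ B' := closedBall_subset_closedBall (by nlinarith)
  have hB'meas : MeasurableSet B' := measurableSet_closedBall
  have hBmeas : MeasurableSet B := measurableSet_closedBall
  have hm0 : volume B ≠ 0 := (measure_closedBall_pos volume h hε).ne'
  have hmtop : volume B ≠ ⊤ := measure_closedBall_lt_top.ne
  -- measure ratio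
  have hmeas_ratio : volume B' = ENNReal.ofReal r * volume B := by
    rw [hB_def, hB'_def, Measure.addHaar_closedBall volume h hε.le,
      Measure.addHaar_closedBall volume h (by linarith : (0:ℝ) ≤ 7/4 * ε),
      finrank_euclideanSpace_fin, mul_pow, ENNReal.ofReal_mul (by positivity), mul_assoc]
  set a : ℝ := ⨍ y in B, φ y with ha_def
  set f₁ : EuclideanSpace ℝ (Fin d) → ℝ := fun x => a * H (2 - ‖x - h‖ / ε) with hf₁
  set f₂ : EuclideanSpace ℝ (Fin d) → ℝ := fun x => φ x * (H (‖x - h‖ / ε - 1) - 1) with hf₂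
  have heq : (fun x => Eop d H ε h φ x - φ x) = f₁ + f₂ := by
    funext x; simp only [Eop, hf₁, hf₂, Pi.add_apply]; ring
  have hHcont : Continuous H := hH.continuous
  have hcont1 : Continuous f₁ := by
    apply continuous_const.mul
    exact hHcont.comp (continuous_const.sub ((continuous_id.sub continuous_const).norm.div_const ε))
  have hcont2 : Continuous fun x : EuclideanSpace ℝ (Fin d) =>
      H (‖x - h‖ / ε - 1) - 1 :=
    (hHcont.comp (((continuous_id.sub continuous_const).norm.div_const ε).sub
      continuous_const)).sub continuous_const
  have hf₂m : AEStronglyMeasurable f₂ volume := hφ.1.mul hcont2.aestronglyMeasurable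
  -- pointwise bounds
  have hb1 : ∀ x, ‖f₁ x‖ ≤ ‖B'.indicator (fun _ => a) x‖ := by
    intro x
    by_cases hx : x ∈ B'
    · rw [Set.indicator_of_mem hx]
      simp only [hf₁, norm_mul]
      have := hH01 (2 - ‖x - h‖ / ε)
      calc ‖a‖ * ‖H (2 - ‖x - h‖ / ε)‖ ≤ ‖a‖ * 1 := by
            apply mul_le_mul_of_nonneg_left _ (norm_nonneg a)
            rw [Real.norm_eq_abs, abs_le]; constructor <;> linarith [this.1, this.2]
        _ = ‖a‖ := mul_one _
    · rw [Set.indicator_of_notMem hx]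
      have ht := hdist x hx
      simp [hf₁, hH0 (2 - ‖x - h‖ / ε) (by linarith)]
  have hb2 : ∀ x, ‖f₂ x‖ ≤ ‖B'.indicator φ x‖ := by
    intro x
    by_cases hx : x ∈ B'
    · rw [Set.indicator_of_mem hx]
      simp only [hf₂, norm_mul]
      have := hH01 (‖x - h‖ / ε - 1)
      calc ‖φ x‖ * ‖H (‖x - h‖ / ε - 1) - 1‖ ≤ ‖φ x‖ * 1 := by
            apply mul_le_mul_of_nonneg_left _ (norm_nonneg _)
            rw [Real.norm_eq_abs, abs_le]; constructor <;> linarith [this.1, this.2]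
        _ = ‖φ x‖ := mul_one _
    · rw [Set.indicator_of_notMem hx]
      have ht := hdist x hx
      simp [hf₂, hH1 (‖x - h‖ / ε - 1) (by linarith)]
  -- main estimate pieces
  have hp0 : p ≠ 0 := (lt_of_lt_of_le zero_lt_one hp1).ne'
  have hptR : 1 ≤ p.toReal := by
    have := ENNReal.toReal_mono hp2 hp1
    simpa using this
  have hs_pos : 0 < 1 / p.toReal := by positivity
  have hs_le : 1 / p.toReal ≤ 1 := by
    rw [div_le_one (by linarith)]; exact hptR
  set Np : ℝ≥0∞ := eLpNorm φ p (volume.restrict B') with hNp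
  have hNpB : eLpNorm φ p (volume.restrict B) ≤ Np :=
    eLpNorm_mono_measure φ (Measure.restrict_mono hBsub le_rfl)
  -- bound on the average
  haveI : Fact (volume B < ⊤) := ⟨measure_closedBall_lt_top⟩
  have haest : (‖a‖₊ : ℝ≥0∞) ≤ (volume B)⁻¹ * (eLpNorm φ p (volume.restrict B) *
      (volume B) ^ (1 - 1 / p.toReal)) := by
    have h1 : (‖a‖₊ : ℝ≥0∞) ≤ (volume B)⁻¹ * eLpNorm φ 1 (volume.restrict B) := by
      rw [ha_def, setAverage_eq, measureReal_def, eLpNorm_one_eq_lintegral_enorm]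
      have hnorm : ‖(volume B).toReal⁻¹ • ∫ y in B, φ y‖₊ =
          ‖(volume B).toReal⁻¹‖₊ * ‖∫ y in B, φ y‖₊ := nnnorm_smul _ _
      rw [hnorm, ENNReal.coe_mul]
      have hinv : (‖(volume B).toReal⁻¹‖₊ : ℝ≥0∞) = (volume B)⁻¹ := by
        rw [← enorm_eq_nnnorm, Real.enorm_eq_ofReal (by positivity),
          ENNReal.ofReal_inv_of_pos (ENNReal.toReal_pos hm0 hmtop),
          ENNReal.ofReal_toReal hmtop]
      rw [hinv]
      exact mul_le_mul_right (enorm_integral_le_lintegral_enorm φ) _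
    refine h1.trans (mul_le_mul_right ?_ _)
    have h2 := eLpNorm_le_eLpNorm_mul_rpow_measure_univ (μ := volume.restrict B)
      (f := φ) hp1 (hφ.1.restrict)
    simpa [Measure.restrict_apply_univ] using h2
  -- term 1
  have hterm1 : eLpNorm f₁ p volume ≤ ENNReal.ofReal r * Np := by
    calc eLpNorm f₁ p volume ≤ eLpNorm (B'.indicator fun _ => a) p volume :=
          eLpNorm_mono hb1
      _ = (‖a‖₊ : ℝ≥0∞) * volume B' ^ (1 / p.toReal) :=
          eLpNorm_indicator_const hB'meas hp0 hp2
      _ ≤ ((volume B)⁻¹ * (eLpNorm φ p (volume.restrict B) *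
            (volume B) ^ (1 - 1 / p.toReal))) * volume B' ^ (1 / p.toReal) :=
          mul_le_mul_left haest _
      _ ≤ ENNReal.ofReal r * Np := by
          rw [hmeas_ratio, ENNReal.mul_rpow_of_nonneg _ _ hs_pos.le]
          have hcollapse : (volume B)⁻¹ * (volume B) ^ (1 - 1 / p.toReal) *
              (volume B) ^ (1 / p.toReal) = 1 := by
            rw [← ENNReal.rpow_neg_one, ← ENNReal.rpow_add _ _ hm0 hmtop,
              ← ENNReal.rpow_add _ _ hm0 hmtop,
              show (-1 + (1 - 1/p.toReal) + 1/p.toReal : ℝ) = 0 by ring, ENNReal.rpow_zero]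
          calc (volume B)⁻¹ * (eLpNorm φ p (volume.restrict B) *
                (volume B) ^ (1 - 1 / p.toReal)) *
                (ENNReal.ofReal r ^ (1 / p.toReal) * volume B ^ (1 / p.toReal))
              = ENNReal.ofReal r ^ (1 / p.toReal) * eLpNorm φ p (volume.restrict B) *
                ((volume B)⁻¹ * (volume B) ^ (1 - 1 / p.toReal) *
                  (volume B) ^ (1 / p.toReal)) := by ring
            _ = ENNReal.ofReal r ^ (1 / p.toReal) * eLpNorm φ p (volume.restrict B) := by
                rw [hcollapse, mul_one]
            _ ≤ ENNReal.ofReal r * Np := by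
                apply mul_le_mul' _ hNpB
                calc ENNReal.ofReal r ^ (1 / p.toReal) ≤ ENNReal.ofReal r ^ (1:ℝ) :=
                      ENNReal.rpow_le_rpow_of_exponent_le
                        (by simpa using ENNReal.ofReal_le_ofReal hr1) hs_le
                  _ = ENNReal.ofReal r := ENNReal.rpow_one _
  -- term 2
  have hterm2 : eLpNorm f₂ p volume ≤ Np := by
    calc eLpNorm f₂ p volume ≤ eLpNorm (B'.indicator φ) p volume := eLpNorm_mono hb2
      _ = Np := eLpNorm_indicator_eq_eLpNorm_restrict hB'meas
  -- combine
  rw [heq]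
  calc eLpNorm (f₁ + f₂) p volume ≤ eLpNorm f₁ p volume + eLpNorm f₂ p volume :=
        eLpNorm_add_le hcont1.aestronglyMeasurable hf₂m hp1
    _ ≤ ENNReal.ofReal r * Np + Np := add_le_add hterm1 hterm2
    _ = (ENNReal.ofReal r + 1) * Np := by ring
    _ = ENNReal.ofReal (r + 1) * Np := by
        rw [ENNReal.ofReal_add (by linarith) zero_le_one, ENNReal.ofReal_one]
end

section
/- There exists a constant C > 0 depending only on d and on H such that for every ε > 0, every h ∈ ℝ^d and every continuously differentiable φ : ℝ^d → ℝ with bounded gradient, the error e¹ := ∇E_ε(h)[φ] − ∇φ (defined for x ≠ h) vanishes for |x − h| > (7/4)ε and satisfies |e¹(x)| ≤ C · sup_{z ∈ B_{(7/4)ε}(h)} |∇φ(z)| for all x ≠ h. -/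
open MeasureTheory Metric Filter
open scoped ENNReal RealInnerProductSpace Topology

lemma aux_Hsum (H : ℝ → ℝ) (hH : ContDiff ℝ (⊤ : ℕ∞) H)
    (hH0 : ∀ z : ℝ, z ≤ 1/4 → H z = 0)
    (hH1 : ∀ z : ℝ, 3/4 ≤ z → H z = 1)
    (hHsym : ∀ z : ℝ, deriv H z = deriv H (1 - z)) :
    ∀ z : ℝ, H z + H (1 - z) = 1 := by
  have hd : Differentiable ℝ H := hH.differentiable (by simp)
  have h1 : ∀ z : ℝ, HasDerivAt (fun z : ℝ => H (1 - z)) (deriv H (1 - z) * (-1)) z := by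
    intro z
    exact (hd (1 - z)).hasDerivAt.comp z ((hasDerivAt_id z).const_sub 1)
  have h2 : ∀ z : ℝ, HasDerivAt (fun z : ℝ => H z + H (1 - z))
      (deriv H z + deriv H (1 - z) * (-1)) z := fun z => (hd z).hasDerivAt.add (h1 z)
  have hd2 : Differentiable ℝ (fun z : ℝ => H z + H (1 - z)) :=
    fun z => (h2 z).differentiableAt
  have hderiv : ∀ z : ℝ, deriv (fun z : ℝ => H z + H (1 - z)) z = 0 := by
    intro z
    rw [(h2 z).deriv, hHsym z]; ring
  have hconst := is_const_of_deriv_eq_zero hd2 hderiv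
  intro z
  have := hconst z 0
  rw [this, hH0 0 (by norm_num), hH1 (1 - 0) (by norm_num)]
  ring

lemma aux_K (H : ℝ → ℝ) (hH : ContDiff ℝ (⊤ : ℕ∞) H)
    (hH0 : ∀ z : ℝ, z ≤ 1/4 → H z = 0)
    (hH1 : ∀ z : ℝ, 3/4 ≤ z → H z = 1) :
    ∃ K : ℝ, 0 ≤ K ∧ ∀ z : ℝ, |deriv H z| ≤ K := by
  have hc : ContinuousOn (deriv H) (Set.Icc (0:ℝ) 1) :=
    (hH.continuous_deriv (by simp)).continuousOn
  obtain ⟨C, hC⟩ := (isCompact_Icc : IsCompact (Set.Icc (0:ℝ) 1)).exists_bound_of_continuousOn hc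
  refine ⟨max C 0, le_max_right _ _, fun z => ?_⟩
  rcases le_or_gt z 0 with hz | hz
  · have : deriv H z = 0 := by
      have hev : H =ᶠ[nhds z] fun _ => 0 := by
        filter_upwards [Iio_mem_nhds (show z < 1/4 by linarith)] with y hy
        exact hH0 y (le_of_lt hy)
      rw [hev.deriv_eq, deriv_const]
    simp [this, le_max_right]
  rcases le_or_gt z 1 with hz1 | hz1
  · exact le_trans (hC z ⟨hz.le, hz1⟩) (le_max_left _ _)
  · have : deriv H z = 0 := by
      have hev : H =ᶠ[nhds z] fun _ => 1 := by
        filter_upwards [Ioi_mem_nhds (show 3/4 < z by linarith)] with y hy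
        exact hH1 y (le_of_lt hy)
      rw [hev.deriv_eq, deriv_const]
    simp [this, le_max_right]

set_option maxHeartbeats 1000000 in
/-- The error `e¹ := ∇E_ε(h)[φ] - ∇φ` vanishes for `|x - h| > (7/4)ε` and is pointwise
bounded by `C sup_{B_{(7/4)ε}(h)} |∇φ|`, with `C` depending only on `d` and `H`. -/
theorem stmt8 (d : ℕ) (hd : 2 ≤ d) (H : ℝ → ℝ) (hH : ContDiff ℝ (⊤ : ℕ∞) H)
    (hH01 : ∀ z : ℝ, 0 ≤ H z ∧ H z ≤ 1)
    (hH0 : ∀ z : ℝ, z ≤ 1/4 → H z = 0)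
    (hH1 : ∀ z : ℝ, 3/4 ≤ z → H z = 1)
    (hHsym : ∀ z : ℝ, deriv H z = deriv H (1 - z)) :
    ∃ C : ℝ, 0 < C ∧
      ∀ (ε : ℝ), 0 < ε → ∀ (h : EuclideanSpace ℝ (Fin d))
        (φ : EuclideanSpace ℝ (Fin d) → ℝ), ContDiff ℝ 1 φ →
        (∃ M : ℝ, ∀ z, ‖gradient φ z‖ ≤ M) →
        ∀ x, x ≠ h →
          (7/4 * ε < ‖x - h‖ → gradient (Eop d H ε h φ) x - gradient φ x = 0) ∧
          ‖gradient (Eop d H ε h φ) x - gradient φ x‖ ≤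
            C * sSup ((fun z => ‖gradient φ z‖) '' closedBall h (7/4 * ε)) := by
  classical
  obtain ⟨K, hK0, hKb⟩ := aux_K H hH hH0 hH1
  have hsum := aux_Hsum H hH hH0 hH1 hHsym
  refine ⟨1 + 3*K, by positivity, ?_⟩
  intro ε hε h φ hφ hMex x hx
  obtain ⟨M, hM⟩ := hMex
  have hφd : Differentiable ℝ φ := hφ.differentiable one_ne_zero
  set A : ℝ := ⨍ y in closedBall h ε, φ y with hA_def
  set g : EuclideanSpace ℝ (Fin d) → ℝ := fun y => H (2 - ‖y - h‖ / ε) with hg_def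
  set ψ : EuclideanSpace ℝ (Fin d) → ℝ := fun y => (A - φ y) * g y with hψ_def
  have hEop : Eop d H ε h φ = fun y => φ y + ψ y := by
    funext y
    have harg : ‖y - h‖/ε - 1 = 1 - (2 - ‖y - h‖/ε) := by ring
    have h1t : H (1 - (2 - ‖y - h‖/ε)) = 1 - H (2 - ‖y - h‖/ε) := by
      have := hsum (2 - ‖y - h‖/ε); linarith
    show A * H (2 - ‖y - h‖ / ε) + φ y * H (‖y - h‖ / ε - 1) = φ y + (A - φ y) * g y
    rw [harg, h1t, hg_def]
    ring
  -- differentiability at x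
  have hxh : x - h ≠ 0 := sub_ne_zero.2 hx
  have hnormd : DifferentiableAt ℝ (fun y : EuclideanSpace ℝ (Fin d) => ‖y - h‖) x :=
    DifferentiableAt.norm ℝ ((differentiable_id.sub_const h) x) hxh
  have hwd : DifferentiableAt ℝ (fun y : EuclideanSpace ℝ (Fin d) => 2 - ‖y - h‖ / ε) x := by
    simp only [div_eq_mul_inv]
    exact (differentiableAt_const (2:ℝ)).sub (hnormd.mul_const ε⁻¹)
  have hgd : DifferentiableAt ℝ g x := by
    exact ((hH.differentiable (by simp)) _).comp x hwd
  have hψd : DifferentiableAt ℝ ψ x := ((differentiableAt_const A).sub (hφd x)).mul hgd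
  have hgrad_sub : gradient (Eop d H ε h φ) x - gradient φ x =
      (InnerProductSpace.toDual ℝ (EuclideanSpace ℝ (Fin d))).symm (fderiv ℝ ψ x) := by
    rw [hEop]
    have hadd : fderiv ℝ (fun y => φ y + ψ y) x = fderiv ℝ φ x + fderiv ℝ ψ x :=
      fderiv_add (hφd x) hψd
    simp only [gradient, hadd, map_add]
    abel
  have hnorm_eq : ‖gradient (Eop d H ε h φ) x - gradient φ x‖ = ‖fderiv ℝ ψ x‖ := by
    rw [hgrad_sub]; exact LinearIsometryEquiv.norm_map _ _
  -- sup facts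
  set S : ℝ := sSup ((fun z => ‖gradient φ z‖) '' closedBall h (7/4 * ε)) with hS_def
  have hballmem : h ∈ closedBall h (7/4 * ε) := mem_closedBall_self (by positivity)
  have hbdd : BddAbove ((fun z => ‖gradient φ z‖) '' closedBall h (7/4 * ε)) :=
    ⟨M, by rintro - ⟨z, -, rfl⟩; exact hM z⟩
  have hleS : ∀ z ∈ closedBall h (7/4 * ε), ‖gradient φ z‖ ≤ S :=
    fun z hz => le_csSup hbdd ⟨z, hz, rfl⟩
  have hS0 : 0 ≤ S := le_trans (norm_nonneg _) (hleS h hballmem)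
  have hgnorm : ∀ (f : EuclideanSpace ℝ (Fin d) → ℝ) (z), ‖gradient f z‖ = ‖fderiv ℝ f z‖ :=
    fun f z => LinearIsometryEquiv.norm_map _ _
  -- part (a)
  have hzero : 7/4 * ε < ‖x - h‖ → gradient (Eop d H ε h φ) x - gradient φ x = 0 := by
    intro hr
    have hopen : IsOpen {y : EuclideanSpace ℝ (Fin d) | 7/4 * ε < ‖y - h‖} :=
      isOpen_lt continuous_const ((continuous_id.sub continuous_const).norm)
    have hev : Eop d H ε h φ =ᶠ[nhds x] φ := by
      rw [hEop]
      filter_upwards [hopen.mem_nhds hr] with y hy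
      have hy' : 7/4 * ε < ‖y - h‖ := hy
      have hH0' : H (2 - ‖y - h‖ / ε) = 0 := by
        apply hH0
        have h1 : (7:ℝ)/4 ≤ ‖y - h‖ / ε := by rw [le_div_iff₀ hε]; linarith
        linarith
      simp only [ψ, g, hH0', mul_zero, add_zero]
    have hfe : fderiv ℝ (Eop d H ε h φ) x = fderiv ℝ φ x := hev.fderiv_eq
    simp only [gradient, hfe, sub_self]
  refine ⟨hzero, ?_⟩
  by_cases hr : 7/4 * ε < ‖x - h‖
  · rw [hzero hr, norm_zero]
    exact mul_nonneg (by positivity) hS0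
  · push_neg at hr
    have hxball : x ∈ closedBall h (7/4 * ε) := by
      rw [mem_closedBall, dist_eq_norm]; exact hr
    -- Lipschitz bound for g
    have hHlip : LipschitzWith K.toNNReal H := by
      apply lipschitzWith_of_nnnorm_deriv_le (hH.differentiable (by simp))
      intro z
      rw [← NNReal.coe_le_coe, coe_nnnorm, Real.coe_toNNReal _ hK0, Real.norm_eq_abs]
      exact hKb z
    have hwlip : LipschitzWith (ε⁻¹).toNNReal
        (fun y : EuclideanSpace ℝ (Fin d) => 2 - ‖y - h‖ / ε) := by
      apply LipschitzWith.of_dist_le_mul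
      intro a b
      rw [Real.dist_eq, dist_eq_norm, Real.coe_toNNReal _ (inv_nonneg.2 hε.le)]
      have heq : (2 - ‖a - h‖ / ε) - (2 - ‖b - h‖ / ε) = (‖b - h‖ - ‖a - h‖) / ε := by ring
      rw [heq, abs_div, abs_of_pos hε]
      have habs : |‖b - h‖ - ‖a - h‖| ≤ ‖a - b‖ := by
        have h1 := abs_norm_sub_norm_le (b - h) (a - h)
        have h2 : (b - h) - (a - h) = b - a := by abel
        rw [h2] at h1
        rw [norm_sub_rev a b]
        exact h1
      rw [div_eq_inv_mul]
      exact mul_le_mul_of_nonneg_left habs (by positivity)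
    have hglip : LipschitzWith (K.toNNReal * (ε⁻¹).toNNReal) g := hHlip.comp hwlip
    have hgfd : ‖fderiv ℝ g x‖ ≤ K / ε := by
      refine (norm_fderiv_le_of_lipschitz ℝ hglip).trans ?_
      rw [NNReal.coe_mul, Real.coe_toNNReal _ hK0, Real.coe_toNNReal _ (by positivity),
        div_eq_mul_inv]
    -- bound |A - φ x|
    have hμpos : (0:ℝ≥0∞) < volume (closedBall h ε) := measure_closedBall_pos volume h hε
    have hμlt : volume (closedBall h ε) < ⊤ := measure_closedBall_lt_top
    have hne : (volume (closedBall h ε)).toReal ≠ 0 :=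
      ENNReal.toReal_ne_zero.2 ⟨hμpos.ne', hμlt.ne⟩
    have hInt : IntegrableOn φ (closedBall h ε) :=
      hφ.continuous.continuousOn.integrableOn_compact (isCompact_closedBall h ε)
    have hALip : ∀ y ∈ closedBall h ε, ‖φ y - φ x‖ ≤ S * (11/4 * ε) := by
      intro y hy
      have hyball : y ∈ closedBall h (7/4 * ε) :=
        closedBall_subset_closedBall (by linarith) hy
      have hbound : ∀ z ∈ closedBall h (7/4 * ε), ‖fderiv ℝ φ z‖ ≤ S := by
        intro z hz; rw [← hgnorm]; exact hleS z hz
      have hmvt := (convex_closedBall h (7/4 * ε)).norm_image_sub_le_of_norm_fderiv_le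
        (fun z _ => hφd z) hbound hxball hyball
      have hdist : ‖y - x‖ ≤ 11/4 * ε := by
        have h1 : ‖y - x‖ ≤ ‖y - h‖ + ‖x - h‖ := by
          have : y - x = (y - h) - (x - h) := by abel
          rw [this]; exact norm_sub_le _ _
        have h2 : ‖y - h‖ ≤ ε := by rwa [mem_closedBall, dist_eq_norm] at hy
        linarith
      calc ‖φ y - φ x‖ ≤ S * ‖y - x‖ := hmvt
        _ ≤ S * (11/4 * ε) := mul_le_mul_of_nonneg_left hdist hS0
    have hAsub : A - φ x = ⨍ y in closedBall h ε, (φ y - φ x) := by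
      rw [hA_def, setAverage_eq, setAverage_eq,
        integral_sub hInt (integrableOn_const hμlt.ne), setIntegral_const,
        smul_sub, smul_smul, inv_mul_cancel₀ (show volume.real (closedBall h ε) ≠ 0 from hne), one_smul]
    have hAbound : |A - φ x| ≤ S * (11/4 * ε) := by
      rw [hAsub, ← Real.norm_eq_abs, setAverage_eq]
      have hIb : ‖∫ y in closedBall h ε, (φ y - φ x)‖ ≤
          (S * (11/4 * ε)) * (volume (closedBall h ε)).toReal :=
        norm_setIntegral_le_of_norm_le_const hμlt hALip
      rw [norm_smul, norm_inv, Real.norm_eq_abs, abs_of_nonneg measureReal_nonneg]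
      calc (volume (closedBall h ε)).toReal⁻¹ * ‖∫ y in closedBall h ε, (φ y - φ x)‖
          ≤ (volume (closedBall h ε)).toReal⁻¹ *
            ((S * (11/4 * ε)) * (volume (closedBall h ε)).toReal) :=
            mul_le_mul_of_nonneg_left hIb (by positivity)
        _ = S * (11/4 * ε) := by field_simp
    -- final bound
    have hgx : |g x| ≤ 1 := by
      rw [abs_of_nonneg (hH01 _).1]; exact (hH01 _).2
    have hfdψ : ‖fderiv ℝ ψ x‖ ≤ (1 + 3*K) * S := by
      have hmul : fderiv ℝ ψ x =
          (A - φ x) • fderiv ℝ g x + g x • fderiv ℝ (fun y => A - φ y) x :=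
        fderiv_mul ((differentiableAt_const A).sub (hφd x)) hgd
      have hcs : fderiv ℝ (fun y : EuclideanSpace ℝ (Fin d) => A - φ y) x = -(fderiv ℝ φ x) :=
        fderiv_const_sub A
      have hφS : ‖fderiv ℝ φ x‖ ≤ S := by rw [← hgnorm]; exact hleS x hxball
      calc ‖fderiv ℝ ψ x‖
          ≤ ‖(A - φ x) • fderiv ℝ g x‖ + ‖g x • fderiv ℝ (fun y => A - φ y) x‖ := by
            rw [hmul]; exact norm_add_le _ _
        _ = |A - φ x| * ‖fderiv ℝ g x‖ + |g x| * ‖fderiv ℝ φ x‖ := by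
            rw [norm_smul, norm_smul, hcs, norm_neg, Real.norm_eq_abs, Real.norm_eq_abs]
        _ ≤ (S * (11/4 * ε)) * (K / ε) + 1 * S := by
            gcongr
        _ = (11/4 * K) * S + S := by
            have hinv : ε * ε⁻¹ = 1 := mul_inv_cancel₀ hε.ne'
            rw [one_mul, div_eq_mul_inv]
            linear_combination (11/4 * S * K) * hinv
        _ ≤ (1 + 3*K) * S := by nlinarith [mul_nonneg hK0 hS0]
    rw [hnorm_eq]
    exact hfdψ
end

section
/- Let φ : ℝ^d → ℝ be continuously differentiable with bounded gradient. Then for every ε > 0 and every x ∈ ℝ^d, the map h ↦ E_ε(h)[φ](x) is differentiable at every h with h ≠ x, and its gradient in h satisfies the commutator identity ∇_h E_ε(h)[φ](x) = E_ε(h)[∇φ](x) − ∇_x E_ε(h)[φ](x), where E_ε(h)[∇φ] is the restriction operator applied componentwise to ∇φ. -/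
open MeasureTheory Metric Filter
open scoped ENNReal RealInnerProductSpace Topology

variable {E : Type*} [NormedAddCommGroup E] [InnerProductSpace ℝ E] [CompleteSpace E]

lemma comp_const_sub_grad {G : E → ℝ} {u : E} {x h : E} (hg : HasGradientAt G u (x - h)) :
    HasGradientAt (fun h' => G (x - h')) (-u) h := by
  have h1 : HasFDerivAt (fun h' : E => x - h') (-(ContinuousLinearMap.id ℝ E)) h :=
    (hasFDerivAt_id h).const_sub x
  have := hg.hasFDerivAt.comp h h1
  rw [hasGradientAt_iff_hasFDerivAt]
  refine this.congr_fderiv ?_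
  ext y
  simp [InnerProductSpace.toDual_apply_apply, inner_neg_left, inner_neg_right]

lemma comp_sub_const_grad {G : E → ℝ} {u : E} {x h : E} (hg : HasGradientAt G u (x - h)) :
    HasGradientAt (fun x' => G (x' - h)) u x := by
  have h1 : HasFDerivAt (fun x' : E => x' - h) (ContinuousLinearMap.id ℝ E) x :=
    (hasFDerivAt_id x).sub_const h
  have := hg.hasFDerivAt.comp x h1
  rw [hasGradientAt_iff_hasFDerivAt]
  refine this.congr_fderiv ?_
  ext y
  simp

lemma diff_H_norm {H : ℝ → ℝ} (hH : ContDiff ℝ (⊤ : ℕ∞) H) {ε : ℝ} (hε : 0 < ε) {v : E} (hv : v ≠ 0) :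
    DifferentiableAt ℝ (fun w : E => H (2 - ‖w‖ / ε)) v ∧
    DifferentiableAt ℝ (fun w : E => H (‖w‖ / ε - 1)) v := by
  have hn : DifferentiableAt ℝ (fun w : E => ‖w‖) v :=
    (contDiffAt_norm (𝕜 := ℝ) (n := 1) hv).differentiableAt one_ne_zero
  have hHd : Differentiable ℝ H := hH.differentiable (by simp)
  have hq : DifferentiableAt ℝ (fun w : E => ‖w‖ / ε) v := by
    simp only [div_eq_inv_mul]; exact hn.const_mul ε⁻¹
  constructor
  · exact (hHd.differentiableAt).comp v ((differentiableAt_const 2).sub hq)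
  · exact (hHd.differentiableAt).comp v (hq.sub_const 1)

variable {d : ℕ}

local notation "EE" => EuclideanSpace ℝ (Fin d)

lemma fderiv_eq_toDual_gradient (φ : EE → ℝ) (hφ : ContDiff ℝ 1 φ) (w : EE) :
    fderiv ℝ φ w = InnerProductSpace.toDual ℝ EE (gradient φ w) := by
  rw [gradient, LinearIsometryEquiv.apply_symm_apply]

lemma translate_setIntegral {G : Type*} [NormedAddCommGroup G] [NormedSpace ℝ G]
    (f : EE → G) (h' : EE) (ε : ℝ) :
    ∫ y in closedBall h' ε, f y = ∫ z in closedBall (0 : EE) ε, f (h' + z) := by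
  have hmp : MeasurePreserving (fun z : EE => h' + z) volume volume :=
    measurePreserving_add_left volume h'
  have hemb : MeasurableEmbedding (fun z : EE => h' + z) :=
    (MeasurableEquiv.addLeft h').measurableEmbedding
  have hpre : (fun z : EE => h' + z) ⁻¹' closedBall h' ε = closedBall (0 : EE) ε := by
    ext z
    simp [mem_closedBall, dist_eq_norm]
  rw [← hmp.setIntegral_preimage_emb hemb f (closedBall h' ε), hpre]

lemma avg_grad (φ : EE → ℝ) (hφ : ContDiff ℝ 1 φ)
    (hbdd : ∃ M : ℝ, ∀ z, ‖gradient φ z‖ ≤ M) {ε : ℝ} (hε : 0 < ε) (h : EE) :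
    HasGradientAt (fun h' : EE => ⨍ y in closedBall h' ε, φ y)
      (⨍ y in closedBall h ε, gradient φ y) h := by
  obtain ⟨M, hM⟩ := hbdd
  set μ : Measure EE := volume.restrict (closedBall (0 : EE) ε) with hμ
  have hφc : Continuous φ := hφ.continuous
  have hφd : Differentiable ℝ φ := hφ.differentiable one_ne_zero
  have hfc : Continuous (fderiv ℝ φ) := hφ.continuous_fderiv one_ne_zero
  -- derivative under the integral
  have key : HasFDerivAt (fun h' : EE => ∫ z in closedBall (0 : EE) ε, φ (h' + z))
      (∫ z in closedBall (0 : EE) ε, fderiv ℝ φ (h + z)) h := by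
    apply hasFDerivAt_integral_of_dominated_of_fderiv_le
      (F' := fun h' z => fderiv ℝ φ (h' + z)) (bound := fun _ => M) (s := ball h 1) (ball_mem_nhds h one_pos)
    · filter_upwards with h'
      exact (hφc.comp (continuous_const.add continuous_id)).aestronglyMeasurable
    · exact ((hφc.comp (continuous_const.add continuous_id)).continuousOn.integrableOn_compact
        (isCompact_closedBall 0 ε))
    · exact (hfc.comp (continuous_const.add continuous_id)).aestronglyMeasurable
    · filter_upwards with z h' _
      rw [fderiv_eq_toDual_gradient φ hφ, LinearIsometryEquiv.norm_map]
      exact hM _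
    · exact (integrableOn_const_iff).mpr (Or.inr (measure_closedBall_lt_top))
    · filter_upwards with z h' _
      have h1 : HasFDerivAt (fun w : EE => w + z) (ContinuousLinearMap.id ℝ EE) h' :=
        (hasFDerivAt_id h').add_const z
      simpa [Function.comp_def] using (hφd (h' + z)).hasFDerivAt.comp h' h1
  -- rewrite the derivative integral
  have hgradc : Continuous (gradient φ) := by
    have : gradient φ = fun w => (InnerProductSpace.toDual ℝ EE).symm (fderiv ℝ φ w) := rfl
    rw [this]
    exact (InnerProductSpace.toDual ℝ EE).symm.continuous.comp hfc
  have hint : IntegrableOn (gradient φ) (closedBall h ε) volume :=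
    hgradc.continuousOn.integrableOn_compact (isCompact_closedBall h ε)
  have hder_eq : (∫ z in closedBall (0 : EE) ε, fderiv ℝ φ (h + z))
      = InnerProductSpace.toDual ℝ EE (∫ y in closedBall h ε, gradient φ y) := by
    rw [← translate_setIntegral (fun y => fderiv ℝ φ y) h ε]
    have : ∀ y, fderiv ℝ φ y = InnerProductSpace.toDual ℝ EE (gradient φ y) :=
      fderiv_eq_toDual_gradient φ hφ
    simp only [this]
    exact (InnerProductSpace.toDual ℝ EE).toLinearIsometry.integral_comp_comm _
  -- put it together
  have hc : ∀ h' : EE, (⨍ y in closedBall h' ε, φ y)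
      = (volume (closedBall (0 : EE) ε)).toReal⁻¹ • ∫ z in closedBall (0 : EE) ε, φ (h' + z) := by
    intro h'
    rw [setAverage_eq, translate_setIntegral φ h' ε, measureReal_def, Measure.addHaar_closedBall_center]
  have final : HasFDerivAt (fun h' : EE => ⨍ y in closedBall h' ε, φ y)
      ((volume (closedBall (0 : EE) ε)).toReal⁻¹ •
        InnerProductSpace.toDual ℝ EE (∫ y in closedBall h ε, gradient φ y)) h := by
    simp only [hc]
    rw [← hder_eq]
    exact key.const_smul (volume (closedBall (0 : EE) ε)).toReal⁻¹
  rw [hasGradientAt_iff_hasFDerivAt]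
  refine final.congr_fderiv ?_
  rw [setAverage_eq, measureReal_def, Measure.addHaar_closedBall_center volume h]
  exact (LinearIsometryEquiv.map_smul _ _).symm

/-- The restriction operator applied componentwise to vector fields. -/
noncomputable def EopV (d : ℕ) (H : ℝ → ℝ) (ε : ℝ) (h : EuclideanSpace ℝ (Fin d))
    (ψ : EuclideanSpace ℝ (Fin d) → EuclideanSpace ℝ (Fin d))
    (x : EuclideanSpace ℝ (Fin d)) : EuclideanSpace ℝ (Fin d) :=
  H (2 - ‖x - h‖ / ε) • (⨍ y in closedBall h ε, ψ y) + H (‖x - h‖ / ε - 1) • ψ x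

/-- Commutator identity for the derivative of `E_ε(h)[φ](x)` with respect to the
parameter `h`: `∇_h E_ε(h)[φ](x) = E_ε(h)[∇φ](x) - ∇_x E_ε(h)[φ](x)`. -/
theorem stmt13 (d : ℕ) (hd : 2 ≤ d) (H : ℝ → ℝ) (hH : ContDiff ℝ (⊤ : ℕ∞) H)
    (hH01 : ∀ z : ℝ, 0 ≤ H z ∧ H z ≤ 1)
    (hH0 : ∀ z : ℝ, z ≤ 1/4 → H z = 0)
    (hH1 : ∀ z : ℝ, 3/4 ≤ z → H z = 1)
    (hHsym : ∀ z : ℝ, deriv H z = deriv H (1 - z))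
    (ε : ℝ) (hε : 0 < ε)
    (φ : EuclideanSpace ℝ (Fin d) → ℝ) (hφ : ContDiff ℝ 1 φ)
    (hbdd : ∃ M : ℝ, ∀ z, ‖gradient φ z‖ ≤ M)
    (x h : EuclideanSpace ℝ (Fin d)) (hxh : h ≠ x) :
    HasGradientAt (fun h' => Eop d H ε h' φ x)
      (EopV d H ε h (gradient φ) x - gradient (Eop d H ε h φ) x) h := by
  obtain ⟨hdg, hdk⟩ := diff_H_norm (E := EuclideanSpace ℝ (Fin d)) hH hε
    (sub_ne_zero.mpr (Ne.symm hxh))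
  set ug := gradient (fun w : EuclideanSpace ℝ (Fin d) => H (2 - ‖w‖ / ε)) (x - h) with hug
  set uk := gradient (fun w : EuclideanSpace ℝ (Fin d) => H (‖w‖ / ε - 1)) (x - h) with huk
  have hGg : HasGradientAt (fun w : EuclideanSpace ℝ (Fin d) => H (2 - ‖w‖ / ε)) ug (x - h) :=
    hdg.hasGradientAt
  have hGk : HasGradientAt (fun w : EuclideanSpace ℝ (Fin d) => H (‖w‖ / ε - 1)) uk (x - h) :=
    hdk.hasGradientAt
  set a := ⨍ y in closedBall h ε, φ y with ha
  set G := ⨍ y in closedBall h ε, gradient φ y with hG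
  have hA : HasGradientAt (fun h' => ⨍ y in closedBall h' ε, φ y) G h := avg_grad φ hφ hbdd hε h
  have hgh := comp_const_sub_grad hGg
  have hkh := comp_const_sub_grad hGk
  have hgx := comp_sub_const_grad hGg
  have hkx := comp_sub_const_grad hGk
  have hφx : HasGradientAt φ (gradient φ x) x := ((hφ.differentiable one_ne_zero) x).hasGradientAt
  -- the gradient of `Eop` in the variable `x`
  have hEx : HasGradientAt (Eop d H ε h φ)
      ((a • ug + (φ x • uk + H (‖x - h‖ / ε - 1) • gradient φ x))) x := by
    rw [hasGradientAt_iff_hasFDerivAt]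
    have L := (hgx.hasFDerivAt.const_mul a).add (hφx.hasFDerivAt.mul hkx.hasFDerivAt)
    have heq : (InnerProductSpace.toDual ℝ (EuclideanSpace ℝ (Fin d)))
        (a • ug + (φ x • uk + H (‖x - h‖ / ε - 1) • gradient φ x))
        = a • (InnerProductSpace.toDual ℝ (EuclideanSpace ℝ (Fin d)) ug)
          + ((φ x) • (InnerProductSpace.toDual ℝ (EuclideanSpace ℝ (Fin d)) uk)
            + H (‖x - h‖ / ε - 1) •
              (InnerProductSpace.toDual ℝ (EuclideanSpace ℝ (Fin d)) (gradient φ x))) := by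
      simp [_root_.map_add, _root_.map_smul]
    rw [heq]
    exact L
  -- the gradient of `Eop` in the variable `h`
  have hWeq : EopV d H ε h (gradient φ) x - gradient (Eop d H ε h φ) x
      = (a • (-ug) + H (2 - ‖x - h‖ / ε) • G) + φ x • (-uk) := by
    rw [hEx.gradient]
    simp only [EopV, ← hG]
    module
  rw [hWeq, hasGradientAt_iff_hasFDerivAt]
  have L := (hA.hasFDerivAt.mul hgh.hasFDerivAt).add (hkh.hasFDerivAt.const_mul (φ x))
  have heq : (InnerProductSpace.toDual ℝ (EuclideanSpace ℝ (Fin d)))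
      ((a • (-ug) + H (2 - ‖x - h‖ / ε) • G) + φ x • (-uk))
      = (a • (InnerProductSpace.toDual ℝ (EuclideanSpace ℝ (Fin d)) (-ug))
        + H (2 - ‖x - h‖ / ε) • (InnerProductSpace.toDual ℝ (EuclideanSpace ℝ (Fin d)) G))
        + φ x • (InnerProductSpace.toDual ℝ (EuclideanSpace ℝ (Fin d)) (-uk)) := by
    simp [_root_.map_add, _root_.map_smul]
  rw [heq]
  exact L
end

section
/- Let T > 0, let h : [0,T] → ℝ^d be Lipschitz continuous, and let φ : [0,T] × ℝ^d → ℝ be continuously differentiable with bounded derivatives. Then for almost every t ∈ (0,T) (namely every t at which h is differentiable with derivative Y(t)) and every x ∈ ℝ^d with x ≠ h(t), the map t ↦ E_ε(h(t))[φ(t,·)](x) is differentiable at t with derivative E_ε(h(t))[∂_t φ(t,·)](x) + E_ε(h(t))[∇_x φ(t,·)](x) · Y(t) − ∇_x E_ε(h(t))[φ(t,·)](x) · Y(t). -/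
open MeasureTheory Metric Filter
open scoped ENNReal RealInnerProductSpace Topology

section Aux

open scoped NNReal

/-- Translation change of variables for integrals over closed balls. -/
lemma setIntegral_closedBall_add {d : ℕ} {V : Type*} [NormedAddCommGroup V] [NormedSpace ℝ V]
    (c : EuclideanSpace ℝ (Fin d)) (ε : ℝ) (f : EuclideanSpace ℝ (Fin d) → V) :
    ∫ y in closedBall c ε, f y = ∫ y in closedBall (0:EuclideanSpace ℝ (Fin d)) ε, f (c + y) := by
  have hmp : MeasurePreserving (fun y : EuclideanSpace ℝ (Fin d) => c + y) volume volume :=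
    measurePreserving_add_left volume c
  have hemb : MeasurableEmbedding (fun y : EuclideanSpace ℝ (Fin d) => c + y) :=
    (MeasurableEquiv.addLeft c).measurableEmbedding
  have hpre : (fun y : EuclideanSpace ℝ (Fin d) => c + y) ⁻¹' closedBall c ε
      = closedBall (0:EuclideanSpace ℝ (Fin d)) ε := by
    ext y
    simp [mem_closedBall, dist_eq_norm, add_sub_cancel_left]
  rw [← hpre, hmp.setIntegral_preimage_emb hemb]

lemma real_inner_gradient {d : ℕ} (f : EuclideanSpace ℝ (Fin d) → ℝ)
    (x Y : EuclideanSpace ℝ (Fin d)) : ⟪gradient f x, Y⟫ = fderiv ℝ f x Y := by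
  rw [gradient]; exact InnerProductSpace.toDual_symm_apply

lemma vol_closedBall_const {d : ℕ} (c : EuclideanSpace ℝ (Fin d)) (ε : ℝ) :
    volume (closedBall c ε) = volume (closedBall (0:EuclideanSpace ℝ (Fin d)) ε) :=
  MeasureTheory.Measure.addHaar_closedBall_center _ _ _

/-- Explicit spatial derivative (applied to `Y`) of the Eop-shaped function. -/
lemma fderiv_Eop_apply {d : ℕ} (H : ℝ → ℝ) (hH : ContDiff ℝ (⊤ : ℕ∞) H) (ε : ℝ)
    (f : EuclideanSpace ℝ (Fin d) → ℝ) (c : EuclideanSpace ℝ (Fin d)) (A : ℝ)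
    (ff' : EuclideanSpace ℝ (Fin d) →L[ℝ] ℝ)
    (x : EuclideanSpace ℝ (Fin d)) (hx : x ≠ c)
    (hf : HasFDerivAt f ff' x) (Y : EuclideanSpace ℝ (Fin d)) :
    (fderiv ℝ (fun x' => A * H (2 - ‖x' - c‖ / ε) + f x' * H (‖x' - c‖ / ε - 1)) x) Y
      = A * (deriv H (2 - ‖x - c‖ / ε) * (-(⟪x - c, Y⟫ / ‖x - c‖) / ε))
        + (ff' Y * H (‖x - c‖ / ε - 1)
           + f x * (deriv H (‖x - c‖ / ε - 1) * (⟪x - c, Y⟫ / ‖x - c‖ / ε))) := by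
  have hrt : (0:ℝ) < ‖x - c‖ := norm_pos_iff.2 (sub_ne_zero.2 hx)
  have hHd : ∀ z : ℝ, HasDerivAt H (deriv H z) z := fun z =>
    ((hH.differentiable (by simp)) z).hasDerivAt
  have hsub : HasFDerivAt (fun x' : EuclideanSpace ℝ (Fin d) => x' - c)
      (ContinuousLinearMap.id ℝ _) x := (hasFDerivAt_id x).sub_const c
  have hn2 := hsub.norm_sq
  have hnsq := hn2.sqrt (by positivity)
  have hfe : (fun x' : EuclideanSpace ℝ (Fin d) => Real.sqrt (‖x' - c‖ ^ 2))
      = fun x' => ‖x' - c‖ := funext fun x' => Real.sqrt_sq (norm_nonneg _)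
  rw [hfe] at hnsq
  set N := (1 / (2 * Real.sqrt (‖x - c‖ ^ 2))) •
    ((2:ℕ) • (innerSL ℝ (x - c)).comp (ContinuousLinearMap.id ℝ _)) with hN
  have hNY : N Y = ⟪x - c, Y⟫ / ‖x - c‖ := by
    rw [hN, Real.sqrt_sq hrt.le]
    simp only [ContinuousLinearMap.smul_apply, ContinuousLinearMap.coe_smul', Pi.smul_apply,
      ContinuousLinearMap.comp_apply, ContinuousLinearMap.coe_id', id_eq, innerSL_apply_apply,
      smul_eq_mul, nsmul_eq_mul, Nat.cast_ofNat]
    field_simp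
  have hdiv : HasFDerivAt (fun x' : EuclideanSpace ℝ (Fin d) => ‖x' - c‖ / ε) (ε⁻¹ • N) x := by
    simpa [div_eq_mul_inv, smul_smul, mul_comm] using hnsq.mul_const ε⁻¹
  have hinner1 : HasFDerivAt (fun x' : EuclideanSpace ℝ (Fin d) => 2 - ‖x' - c‖ / ε)
      (-(ε⁻¹ • N)) x := hdiv.const_sub 2
  have hinner2 : HasFDerivAt (fun x' : EuclideanSpace ℝ (Fin d) => ‖x' - c‖ / ε - 1)
      (ε⁻¹ • N) x := hdiv.sub_const 1
  have hHa : HasFDerivAt (fun x' : EuclideanSpace ℝ (Fin d) => H (2 - ‖x' - c‖ / ε))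
      (deriv H (2 - ‖x - c‖ / ε) • (-(ε⁻¹ • N))) x :=
    (hHd _).comp_hasFDerivAt x hinner1
  have hHb : HasFDerivAt (fun x' : EuclideanSpace ℝ (Fin d) => H (‖x' - c‖ / ε - 1))
      (deriv H (‖x - c‖ / ε - 1) • (ε⁻¹ • N)) x :=
    (hHd _).comp_hasFDerivAt x hinner2
  have hfull := (hHa.const_mul A).add (hf.mul hHb)
  rw [HasFDerivAt.fderiv (f := fun x' => A * H (2 - ‖x' - c‖ / ε) + f x' * H (‖x' - c‖ / ε - 1)) hfull]
  simp only [ContinuousLinearMap.add_apply, ContinuousLinearMap.smul_apply,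
    ContinuousLinearMap.coe_smul', Pi.smul_apply, ContinuousLinearMap.neg_apply,
    smul_eq_mul]
  rw [hNY]
  ring

end Aux

/-- Formula for the time derivative of `t ↦ E_ε(h(t))[φ(t,·)](x)` when `h` is Lipschitz,
at every time `t` at which `h` is differentiable with derivative `Y`. -/
theorem stmt14 (d : ℕ) (hd : 2 ≤ d) (H : ℝ → ℝ) (hH : ContDiff ℝ (⊤ : ℕ∞) H)
    (hH01 : ∀ z : ℝ, 0 ≤ H z ∧ H z ≤ 1)
    (hH0 : ∀ z : ℝ, z ≤ 1/4 → H z = 0)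
    (hH1 : ∀ z : ℝ, 3/4 ≤ z → H z = 1)
    (hHsym : ∀ z : ℝ, deriv H z = deriv H (1 - z))
    (ε : ℝ) (hε : 0 < ε) (T : ℝ) (hT : 0 < T)
    (h : ℝ → EuclideanSpace ℝ (Fin d)) (K : NNReal)
    (hLip : LipschitzOnWith K h (Set.Icc 0 T))
    (φ : ℝ → EuclideanSpace ℝ (Fin d) → ℝ)
    (hφ : ContDiff ℝ 1 (fun q : ℝ × EuclideanSpace ℝ (Fin d) => φ q.1 q.2))
    (hbdd : ∃ M : ℝ, ∀ q : ℝ × EuclideanSpace ℝ (Fin d),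
      ‖fderiv ℝ (fun q : ℝ × EuclideanSpace ℝ (Fin d) => φ q.1 q.2) q‖ ≤ M)
    (t : ℝ) (ht : t ∈ Set.Ioo 0 T)
    (Y : EuclideanSpace ℝ (Fin d)) (hY : HasDerivAt h Y t)
    (x : EuclideanSpace ℝ (Fin d)) (hx : x ≠ h t) :
    HasDerivAt (fun s => Eop d H ε (h s) (φ s) x)
      (Eop d H ε (h t) (fun y => deriv (fun s => φ s y) t) x
        + ⟪EopV d H ε (h t) (fun y => gradient (φ t) y) x, Y⟫
        - ⟪gradient (Eop d H ε (h t) (φ t)) x, Y⟫) t := by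
  obtain ⟨M, hM⟩ := hbdd
  set Φ : ℝ × EuclideanSpace ℝ (Fin d) → ℝ := fun q => φ q.1 q.2 with hΦdef
  have hΦdiff : Differentiable ℝ Φ := hφ.differentiable one_ne_zero
  set D := fderiv ℝ Φ with hDdef
  have hDcont : Continuous D := hφ.continuous_fderiv one_ne_zero
  set B0 := closedBall (0 : EuclideanSpace ℝ (Fin d)) ε with hB0
  set c : ℝ := (volume B0).toReal with hc
  have hrt : (0:ℝ) < ‖x - h t‖ := norm_pos_iff.2 (sub_ne_zero.2 hx)
  set rt : ℝ := ‖x - h t‖ with hrtdef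
  set p : ℝ := ⟪x - h t, Y⟫ with hp
  -- time-partial derivatives of φ
  have hpart : ∀ (s : ℝ) (y : EuclideanSpace ℝ (Fin d)),
      HasDerivAt (fun s' => φ s' y) (D (s, y) (1, 0)) s := by
    intro s y
    have h1 : HasDerivAt (fun s' : ℝ => (s', y)) ((1:ℝ), (0:EuclideanSpace ℝ (Fin d))) s :=
      (hasDerivAt_id s).prodMk (hasDerivAt_const s y)
    have h2 := (hΦdiff (s, y)).hasFDerivAt.comp_hasDerivAt s h1
    simpa [Function.comp_def] using h2
  -- spatial derivatives of φ
  have hsp : ∀ (s : ℝ) (y : EuclideanSpace ℝ (Fin d)),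
      HasFDerivAt (φ s) ((D (s, y)).comp (ContinuousLinearMap.inr ℝ ℝ _)) y := by
    intro s y
    have h2 := (hΦdiff (s, y)).hasFDerivAt.comp y (hasFDerivAt_prodMk_right s y)
    simpa [Function.comp_def] using h2
  -- derivative of the moving norm
  have hr' : HasDerivAt (fun s => ‖x - h s‖) (-p / rt) t := by
    have h1 : HasDerivAt (fun s => x - h s) (0 - Y) t := (hasDerivAt_const t x).sub hY
    have h2 : HasDerivAt (fun s => ‖x - h s‖ ^ 2) (2 * ⟪x - h t, 0 - Y⟫) t := h1.norm_sq
    have h3 := h2.sqrt (by positivity)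
    have hfe : (fun s => Real.sqrt (‖x - h s‖ ^ 2)) = fun s => ‖x - h s‖ :=
      funext fun s => Real.sqrt_sq (norm_nonneg _)
    rw [hfe] at h3
    convert h3 using 1
    rw [Real.sqrt_sq hrt.le, zero_sub, inner_neg_right]
    ring
  have hHd : ∀ z : ℝ, HasDerivAt H (deriv H z) z := fun z =>
    ((hH.differentiable (by simp)) z).hasDerivAt
  -- derivatives of the two cutoff factors
  have ha : HasDerivAt (fun s => H (2 - ‖x - h s‖ / ε))
      (deriv H (2 - rt / ε) * -(-p / rt / ε)) t := by
    have hinner : HasDerivAt (fun s => 2 - ‖x - h s‖ / ε) (-(-p / rt / ε)) t :=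
      (hr'.div_const ε).const_sub 2
    have := (hHd (2 - rt / ε)).comp t hinner
    simpa [Function.comp_def] using this
  have hb : HasDerivAt (fun s => H (‖x - h s‖ / ε - 1))
      (deriv H (rt / ε - 1) * (-p / rt / ε)) t := by
    have hinner : HasDerivAt (fun s => ‖x - h s‖ / ε - 1) (-p / rt / ε) t :=
      (hr'.div_const ε).sub_const 1
    have := (hHd (rt / ε - 1)).comp t hinner
    simpa [Function.comp_def] using this
  -- derivative of the moving-ball integral
  have hg : HasDerivAt (fun s => ∫ y in B0, φ s (h s + y))
      (∫ y in B0, D (t, h t + y) (1, Y)) t := by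
    have hM0 : 0 ≤ M := le_trans (norm_nonneg _) (hM ((0:ℝ), (0:EuclideanSpace ℝ (Fin d))))
    set M' : NNReal := ⟨M, hM0⟩ with hM'def
    have hΦlip : LipschitzWith M' Φ := by
      refine lipschitzWith_of_nnnorm_fderiv_le hΦdiff fun q => ?_
      rw [← NNReal.coe_le_coe, coe_nnnorm]
      exact hM q
    set δ : ℝ := min t (T - t) with hδdef
    have hδ : 0 < δ := lt_min ht.1 (sub_pos.2 ht.2)
    have hball : ball t δ ⊆ Set.Icc 0 T := by
      intro s hs
      rw [mem_ball, Real.dist_eq] at hs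
      constructor
      · nlinarith [abs_lt.1 hs, min_le_left t (T - t)]
      · nlinarith [abs_lt.1 hs, min_le_right t (T - t)]
    have hcurve : ∀ y : EuclideanSpace ℝ (Fin d),
        LipschitzOnWith (max 1 K) (fun s => ((s, h s + y) : ℝ × EuclideanSpace ℝ (Fin d)))
          (Set.Icc 0 T) := by
      intro y
      have h1 : LipschitzOnWith 1 (fun s : ℝ => s) (Set.Icc 0 T) :=
        LipschitzWith.id.lipschitzOnWith
      have h2 : LipschitzOnWith K (fun s => h s + y) (Set.Icc 0 T) := by
        intro a ha b hb
        simpa [edist_add_right] using hLip ha hb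
      exact h1.prodMk h2
    have hBfin : volume B0 < ⊤ := measure_closedBall_lt_top
    haveI : IsFiniteMeasure (volume.restrict B0) := ⟨Measure.restrict_apply_univ B0 ▸ hBfin⟩
    have hccurve : ∀ s : ℝ, Continuous fun y : EuclideanSpace ℝ (Fin d) => φ s (h s + y) := by
      intro s
      exact hφ.continuous.comp (continuous_const.prodMk (continuous_const.add continuous_id))
    have key := hasDerivAt_integral_of_dominated_loc_of_lip
      (μ := volume.restrict B0)
      (F := fun s y => φ s (h s + y))
      (F' := fun y => D (t, h t + y) (1, Y))
      (bound := fun _ => ((M' * max 1 K : NNReal) : ℝ))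
      (ball_mem_nhds t hδ)
      (Eventually.of_forall fun s => (hccurve s).aestronglyMeasurable)
      ((hccurve t).continuousOn.integrableOn_compact (isCompact_closedBall _ _))
      (by
        apply Continuous.aestronglyMeasurable
        exact (hDcont.comp
          (continuous_const.prodMk (continuous_const.add continuous_id))).clm_apply
          continuous_const)
      (Eventually.of_forall fun y => by
        have h0 := (hΦlip.comp_lipschitzOnWith (hcurve y)).mono hball
        have heq : Real.nnabs ((M' * max 1 K : NNReal) : ℝ) = M' * max 1 K := Real.nnabs_coe _
        rw [heq]
        exact h0)
      (integrable_const _)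
      (Eventually.of_forall fun y => by
        have h1 : HasDerivAt (fun s : ℝ => ((s, h s + y) : ℝ × EuclideanSpace ℝ (Fin d)))
            ((1:ℝ), Y) t := (hasDerivAt_id t).prodMk (hY.add_const y)
        have h2 := (hΦdiff (t, h t + y)).hasFDerivAt.comp_hasDerivAt t h1
        simpa [Function.comp_def] using h2)
    exact key.2
  -- the rewritten form of the moving Eop
  have hEopEq : (fun s => Eop d H ε (h s) (φ s) x) =
      fun s => (c⁻¹ * ∫ y in B0, φ s (h s + y)) * H (2 - ‖x - h s‖ / ε)
        + φ s x * H (‖x - h s‖ / ε - 1) := by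
    funext s
    rw [Eop, setAverage_eq, measureReal_def, setIntegral_closedBall_add, vol_closedBall_const, smul_eq_mul]
  -- the actual derivative via product rules
  have key : HasDerivAt (fun s => (c⁻¹ * ∫ y in B0, φ s (h s + y)) * H (2 - ‖x - h s‖ / ε)
        + φ s x * H (‖x - h s‖ / ε - 1))
      ((c⁻¹ * ∫ y in B0, D (t, h t + y) (1, Y)) * H (2 - rt / ε)
        + (c⁻¹ * ∫ y in B0, φ t (h t + y)) * (deriv H (2 - rt / ε) * -(-p / rt / ε))
        + (D (t, x) (1, 0) * H (rt / ε - 1)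
           + φ t x * (deriv H (rt / ε - 1) * (-p / rt / ε)))) t := by
    have := ((hg.const_mul c⁻¹).mul ha).add ((hpart t x).mul hb)
    exact this
  -- now identify the derivative value with the stated formula
  have hφt : ContDiff ℝ 1 (φ t) := by
    have := hφ.comp ((contDiff_const (c := t)).prodMk contDiff_id)
    simpa [Function.comp_def] using this
  -- integrability of the pieces
  have hcont10 : Continuous fun y : EuclideanSpace ℝ (Fin d) =>
      D (t, h t + y) ((1:ℝ), (0:EuclideanSpace ℝ (Fin d))) :=
    (hDcont.comp (continuous_const.prodMk (continuous_const.add continuous_id))).clm_apply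
      continuous_const
  have hcont0Y : Continuous fun y : EuclideanSpace ℝ (Fin d) =>
      D (t, h t + y) ((0:ℝ), Y) :=
    (hDcont.comp (continuous_const.prodMk (continuous_const.add continuous_id))).clm_apply
      continuous_const
  have hint10 : IntegrableOn (fun y => D (t, h t + y) ((1:ℝ), (0:EuclideanSpace ℝ (Fin d)))) B0
      volume := hcont10.continuousOn.integrableOn_compact (isCompact_closedBall _ _)
  have hint0Y : IntegrableOn (fun y => D (t, h t + y) ((0:ℝ), Y)) B0 volume :=
    hcont0Y.continuousOn.integrableOn_compact (isCompact_closedBall _ _)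
  -- split the integral
  have hsplit : (∫ y in B0, D (t, h t + y) (1, Y))
      = (∫ y in B0, D (t, h t + y) ((1:ℝ), (0:EuclideanSpace ℝ (Fin d))))
        + ∫ y in B0, D (t, h t + y) ((0:ℝ), Y) := by
    rw [← integral_add hint10 hint0Y]
    refine setIntegral_congr_fun measurableSet_closedBall fun y _ => ?_
    rw [← map_add]
    norm_num [Prod.mk_add_mk]
  -- term 1: Eop applied to the time derivative
  have hT1 : Eop d H ε (h t) (fun y => deriv (fun s => φ s y) t) x
      = (c⁻¹ * ∫ y in B0, D (t, h t + y) ((1:ℝ), (0:EuclideanSpace ℝ (Fin d))))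
          * H (2 - rt / ε)
        + D (t, x) (1, 0) * H (rt / ε - 1) := by
    rw [Eop]
    have hder : (fun y => deriv (fun s => φ s y) t)
        = fun y => D (t, y) ((1:ℝ), (0:EuclideanSpace ℝ (Fin d))) :=
      funext fun y => (hpart t y).deriv
    rw [hder, setAverage_eq, measureReal_def, setIntegral_closedBall_add, vol_closedBall_const, smul_eq_mul,
      (hpart t x).deriv]
  -- term 2: the EopV inner product
  have hgradcont : Continuous fun y => gradient (φ t) y := by
    simp only [gradient]
    exact (InnerProductSpace.toDual ℝ _).symm.continuous.comp (hφt.continuous_fderiv one_ne_zero)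
  have hgint : IntegrableOn (fun y => gradient (φ t) y) (closedBall (h t) ε) volume :=
    hgradcont.continuousOn.integrableOn_compact (isCompact_closedBall _ _)
  have hT2 : ⟪EopV d H ε (h t) (fun y => gradient (φ t) y) x, Y⟫
      = H (2 - rt / ε) * (c⁻¹ * ∫ y in B0, D (t, h t + y) ((0:ℝ), Y))
        + H (rt / ε - 1) * D (t, x) ((0:ℝ), Y) := by
    rw [EopV, inner_add_left, real_inner_smul_left, real_inner_smul_left]
    congr 1
    · congr 1
      rw [setAverage_eq, measureReal_def, vol_closedBall_const, real_inner_smul_left]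
      congr 1
      calc ⟪∫ y in closedBall (h t) ε, gradient (φ t) y, Y⟫
          = (innerSL ℝ Y) (∫ y in closedBall (h t) ε, gradient (φ t) y) := by
            rw [innerSL_apply_apply, real_inner_comm]
        _ = ∫ y in closedBall (h t) ε, (innerSL ℝ Y) (gradient (φ t) y) :=
            (ContinuousLinearMap.integral_comp_comm _ hgint).symm
        _ = ∫ y in closedBall (h t) ε, D (t, y) ((0:ℝ), Y) := by
            refine setIntegral_congr_fun measurableSet_closedBall fun y _ => ?_
            rw [innerSL_apply_apply, real_inner_comm, real_inner_gradient, (hsp t y).fderiv]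
            simp
        _ = ∫ y in B0, D (t, h t + y) ((0:ℝ), Y) := setIntegral_closedBall_add (h t) ε _
    · congr 1
      rw [real_inner_gradient, (hsp t x).fderiv]
      simp
  -- term 3: the spatial gradient of Eop
  have hT3 : ⟪gradient (Eop d H ε (h t) (φ t)) x, Y⟫
      = (c⁻¹ * ∫ y in B0, φ t (h t + y)) * (deriv H (2 - rt / ε) * (-(p / rt) / ε))
        + (D (t, x) ((0:ℝ), Y) * H (rt / ε - 1)
           + φ t x * (deriv H (rt / ε - 1) * (p / rt / ε))) := by
    rw [real_inner_gradient]
    have hfe : Eop d H ε (h t) (φ t) = fun x' =>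
        (⨍ y in closedBall (h t) ε, φ t y) * H (2 - ‖x' - h t‖ / ε)
          + φ t x' * H (‖x' - h t‖ / ε - 1) := rfl
    rw [hfe, fderiv_Eop_apply H hH ε (φ t) (h t) _ _ x hx (hsp t x) Y]
    have hA : (⨍ y in closedBall (h t) ε, φ t y) = c⁻¹ * ∫ y in B0, φ t (h t + y) := by
      rw [setAverage_eq, measureReal_def, setIntegral_closedBall_add, vol_closedBall_const, smul_eq_mul]
    rw [hA]
    simp only [ContinuousLinearMap.comp_apply, ContinuousLinearMap.inr_apply]
    rfl
  -- assemble
  have hval : Eop d H ε (h t) (fun y => deriv (fun s => φ s y) t) x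
        + ⟪EopV d H ε (h t) (fun y => gradient (φ t) y) x, Y⟫
        - ⟪gradient (Eop d H ε (h t) (φ t)) x, Y⟫
      = (c⁻¹ * ∫ y in B0, D (t, h t + y) (1, Y)) * H (2 - rt / ε)
        + (c⁻¹ * ∫ y in B0, φ t (h t + y)) * (deriv H (2 - rt / ε) * -(-p / rt / ε))
        + (D (t, x) (1, 0) * H (rt / ε - 1)
           + φ t x * (deriv H (rt / ε - 1) * (-p / rt / ε))) := by
    rw [hT1, hT2, hT3, hsplit]
    ring
  rw [hEopEq, hval]
  exact key
end

section
/- Let φ : ℝ^d → ℝ^d be a continuously differentiable, compactly supported vector field with div φ(x) = 0 for all x ∈ B_ε(h). Then, applying the restriction operator componentwise, the function div φ − div E_ε(h)[φ] has zero mean over the annulus B_{2ε}(h) \ B_ε(h); i.e. ∫_{B_{2ε}(h) \ B_ε(h)} ( div φ(x) − div E_ε(h)[φ](x) ) dx = 0. -/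
open MeasureTheory Metric Filter
open scoped ENNReal RealInnerProductSpace Topology

/-- The divergence of a vector field on `ℝ^d`. -/
noncomputable def diverg (d : ℕ) (f : EuclideanSpace ℝ (Fin d) → EuclideanSpace ℝ (Fin d))
    (x : EuclideanSpace ℝ (Fin d)) : ℝ :=
  ∑ i, fderiv ℝ f x (EuclideanSpace.single i 1) i

/-- Integral of a directional derivative of a compactly supported `C¹` scalar function
vanishes. -/
lemma aux_integral_fderiv_apply_eq_zero {d : ℕ}
    (u : EuclideanSpace ℝ (Fin d) → ℝ) (hu : ContDiff ℝ 1 u)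
    (hus : HasCompactSupport u) (v : EuclideanSpace ℝ (Fin d)) :
    ∫ x, fderiv ℝ u x v = 0 := by
  obtain ⟨R, hR0, hRs⟩ : ∃ R : ℝ, 0 < R ∧ tsupport u ⊆ closedBall 0 R := by
    obtain ⟨R, hR, h2⟩ := hus.isBounded.subset_closedBall_lt 0 0
    exact ⟨R, hR, h2⟩
  set f : ContDiffBump (0 : EuclideanSpace ℝ (Fin d)) :=
    ⟨R + 1, R + 2, by linarith, by linarith⟩ with hf_def
  have hf1 : ∀ x ∈ ball (0 : EuclideanSpace ℝ (Fin d)) (R + 1), f x = 1 := fun x hx =>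
    f.one_of_mem_closedBall (ball_subset_closedBall hx)
  have hfd : ∀ x ∈ ball (0 : EuclideanSpace ℝ (Fin d)) (R + 1), fderiv ℝ f x = 0 := by
    intro x hx
    have he : (⇑f) =ᶠ[𝓝 x] fun _ => (1 : ℝ) :=
      Filter.eventuallyEq_of_mem (isOpen_ball.mem_nhds hx) hf1
    rw [he.fderiv_eq, fderiv_fun_const]
    rfl
  have hts : ∀ x ∈ tsupport u, x ∈ ball (0 : EuclideanSpace ℝ (Fin d)) (R + 1) := by
    intro x hx
    have := hRs hx
    simp only [mem_closedBall, mem_ball] at this ⊢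
    linarith
  have hu'0 : ∀ x, x ∉ tsupport u → fderiv ℝ u x = 0 := by
    intro x hx
    by_contra hne
    exact hx (support_fderiv_subset ℝ (Function.mem_support.mpr hne))
  have h1 : ∀ x, fderiv ℝ u x v = f x * fderiv ℝ u x v := by
    intro x
    by_cases hx : x ∈ tsupport u
    · rw [hf1 x (hts x hx), one_mul]
    · rw [hu'0 x hx]; simp
  have h2 : ∀ x, fderiv ℝ f x v * u x = 0 := by
    intro x
    by_cases hx : x ∈ tsupport u
    · rw [hfd x (hts x hx)]; simp
    · rw [image_eq_zero_of_notMem_tsupport hx, mul_zero]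
  have hu_cont : Continuous u := hu.continuous
  have hu'_cont : Continuous fun x => fderiv ℝ u x v :=
    (hu.continuous_fderiv one_ne_zero).clm_apply continuous_const
  have hf'_cont : Continuous fun x => fderiv ℝ f x v :=
    ((f.contDiff (n := 1)).continuous_fderiv (by simp)).clm_apply continuous_const
  have hint1 : Integrable (fun x => fderiv ℝ f x v * u x) := by
    apply Continuous.integrable_of_hasCompactSupport (hf'_cont.mul hu_cont)
    exact HasCompactSupport.intro hus fun x hx => by
      rw [Pi.mul_apply, image_eq_zero_of_notMem_tsupport hx, mul_zero]
  have hint2 : Integrable (fun x => f x * fderiv ℝ u x v) := by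
    apply Continuous.integrable_of_hasCompactSupport (f.continuous.mul hu'_cont)
    exact HasCompactSupport.intro hus fun x hx => by rw [Pi.mul_apply, hu'0 x hx]; simp
  have hint3 : Integrable (fun x => f x * u x) := by
    apply Continuous.integrable_of_hasCompactSupport (f.continuous.mul hu_cont)
    exact HasCompactSupport.intro hus fun x hx => by
      rw [Pi.mul_apply, image_eq_zero_of_notMem_tsupport hx, mul_zero]
  calc ∫ x, fderiv ℝ u x v = ∫ x, f x * fderiv ℝ u x v := by
        exact integral_congr_ae (Filter.Eventually.of_forall h1)
    _ = - ∫ x, fderiv ℝ f x v * u x :=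
        integral_mul_fderiv_eq_neg_fderiv_mul_of_integrable hint1 hint2 hint3
          (fun x _ => (f.contDiff (n := 1)).differentiable (by simp) x) (fun x _ => hu.differentiable one_ne_zero x)
    _ = 0 := by simp [h2]

/-- Integral of the divergence of a compactly supported `C¹` vector field vanishes. -/
lemma aux_integral_diverg_eq_zero {d : ℕ}
    (ψ : EuclideanSpace ℝ (Fin d) → EuclideanSpace ℝ (Fin d))
    (hψ : ContDiff ℝ 1 ψ) (hψs : HasCompactSupport ψ) :
    ∫ x, diverg d ψ x = 0 := by
  have hcomp : ∀ (i : Fin d) (x : EuclideanSpace ℝ (Fin d)),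
      fderiv ℝ ψ x (EuclideanSpace.single i 1) i
        = fderiv ℝ (fun y => ψ y i) x (EuclideanSpace.single i 1) := by
    intro i x
    have hd : DifferentiableAt ℝ ψ x := (hψ.differentiable one_ne_zero) x
    have hp : HasFDerivAt (fun y => ψ y i)
        ((EuclideanSpace.proj (𝕜 := ℝ) i).comp (fderiv ℝ ψ x)) x :=
      (EuclideanSpace.proj (𝕜 := ℝ) i).hasFDerivAt.comp x hd.hasFDerivAt
    rw [hp.fderiv]
    rfl
  have hcompCD : ∀ i : Fin d, ContDiff ℝ 1 (fun y => ψ y i) := by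
    intro i
    exact ((EuclideanSpace.proj (𝕜 := ℝ) i).contDiff).comp hψ
  have hcompCS : ∀ i : Fin d, HasCompactSupport (fun y => ψ y i) := by
    intro i
    apply HasCompactSupport.intro hψs
    intro x hx
    rw [image_eq_zero_of_notMem_tsupport hx]
    rfl
  have hint : ∀ i : Fin d,
      Integrable (fun x => fderiv ℝ (fun y => ψ y i) x (EuclideanSpace.single i 1)) := by
    intro i
    apply Continuous.integrable_of_hasCompactSupport
    · exact ((hcompCD i).continuous_fderiv one_ne_zero).clm_apply continuous_const
    · apply HasCompactSupport.intro (hcompCS i)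
      intro x hx
      by_contra hne
      exact hx (support_fderiv_subset ℝ (Function.mem_support.mpr
        (fun h0 => hne (by rw [h0]; rfl))))
  have : ∫ x, diverg d ψ x
      = ∑ i, ∫ x, fderiv ℝ (fun y => ψ y i) x (EuclideanSpace.single i 1) := by
    rw [← integral_finset_sum _ fun i _ => hint i]
    apply integral_congr_ae (Filter.Eventually.of_forall fun x => ?_)
    simp only [diverg]
    exact Finset.sum_congr rfl fun i _ => hcomp i x
  rw [this]
  apply Finset.sum_eq_zero
  intro i _
  exact aux_integral_fderiv_apply_eq_zero _ (hcompCD i) (hcompCS i) _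

/-- If `div φ = 0` on `B_ε(h)`, then `div φ - div E_ε(h)[φ]` has zero mean over the
annulus `B_{2ε}(h) \ B_ε(h)`. -/
theorem stmt15 (d : ℕ) (hd : 2 ≤ d) (H : ℝ → ℝ) (hH : ContDiff ℝ (⊤ : ℕ∞) H)
    (hH01 : ∀ z : ℝ, 0 ≤ H z ∧ H z ≤ 1)
    (hH0 : ∀ z : ℝ, z ≤ 1/4 → H z = 0)
    (hH1 : ∀ z : ℝ, 3/4 ≤ z → H z = 1)
    (hHsym : ∀ z : ℝ, deriv H z = deriv H (1 - z))
    (ε : ℝ) (hε : 0 < ε) (h : EuclideanSpace ℝ (Fin d))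
    (φ : EuclideanSpace ℝ (Fin d) → EuclideanSpace ℝ (Fin d))
    (hφ : ContDiff ℝ 1 φ) (hφs : HasCompactSupport φ)
    (hdiv : ∀ x ∈ closedBall h ε, diverg d φ x = 0) :
    ∫ x in closedBall h (2*ε) \ closedBall h ε,
      (diverg d φ x - diverg d (EopV d H ε h φ) x) = 0 := by
  classical
  set c : EuclideanSpace ℝ (Fin d) := ⨍ y in closedBall h ε, φ y with hc
  set a : EuclideanSpace ℝ (Fin d) → ℝ := fun x => H (2 - ‖x - h‖ / ε) with ha_def
  set b : EuclideanSpace ℝ (Fin d) → ℝ := fun x => H (‖x - h‖ / ε - 1) with hb_def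
  have hEeq : ∀ x, EopV d H ε h φ x = a x • c + b x • φ x := fun x => rfl
  -- smoothness of a and b
  have hsm : ∀ G : ℝ → ℝ, ContDiff ℝ (⊤ : ℕ∞) G → (∃ c₀ : ℝ, ∀ t : ℝ, t < 1 → G t = c₀) →
      ContDiff ℝ 1 (fun x : EuclideanSpace ℝ (Fin d) => G (‖x - h‖ / ε)) := by
    intro G hG ⟨c₀, hc₀⟩
    rw [contDiff_iff_contDiffAt]
    intro x
    by_cases hx : x ∈ ball h ε
    · apply contDiffAt_const.congr_of_eventuallyEq
      apply Filter.eventuallyEq_of_mem (isOpen_ball.mem_nhds hx)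
      intro y hy
      have hyn : ‖y - h‖ < ε := by
        rw [mem_ball, dist_eq_norm] at hy; exact hy
      exact hc₀ _ (by rw [div_lt_one hε]; exact hyn)
    · have hxh : x ≠ h := by
        intro e; apply hx; rw [e]; exact mem_ball_self hε
      have h1 : ContDiffAt ℝ 1 (fun y : EuclideanSpace ℝ (Fin d) => ‖y - h‖) x := by
        have hnz : x - h ≠ 0 := sub_ne_zero.mpr hxh
        exact (contDiffAt_norm (𝕜 := ℝ) hnz).comp x (contDiffAt_id.sub contDiffAt_const)
      exact (hG.of_le (by simp)).contDiffAt.comp x (h1.div_const ε)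
  have hG1 : ContDiff ℝ (⊤ : ℕ∞) (fun t : ℝ => H (2 - t)) :=
    hH.comp (contDiff_const.sub contDiff_id)
  have hG2 : ContDiff ℝ (⊤ : ℕ∞) (fun t : ℝ => H (t - 1)) :=
    hH.comp (contDiff_id.sub contDiff_const)
  have ha : ContDiff ℝ 1 a :=
    hsm (fun t => H (2 - t)) hG1 ⟨1, fun t ht => hH1 _ (by linarith)⟩
  have hb : ContDiff ℝ 1 b :=
    hsm (fun t => H (t - 1)) hG2 ⟨0, fun t ht => hH0 _ (by linarith)⟩
  have hE : ContDiff ℝ 1 (EopV d H ε h φ) := by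
    rw [show EopV d H ε h φ = fun x => a x • c + b x • φ x from funext hEeq]
    exact (ha.smul contDiff_const).add (hb.smul hφ)
  set ψ : EuclideanSpace ℝ (Fin d) → EuclideanSpace ℝ (Fin d) := fun x => φ x - EopV d H ε h φ x with hψ_def
  have hψ : ContDiff ℝ 1 ψ := hφ.sub hE
  -- ψ vanishes outside closedBall h (2ε)
  have hψ0 : ∀ x : EuclideanSpace ℝ (Fin d), x ∉ closedBall h (2*ε) → ψ x = 0 := by
    intro x hx
    have ht : 2 < ‖x - h‖ / ε := by
      rw [lt_div_iff₀ hε]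
      rw [mem_closedBall, dist_eq_norm, not_le] at hx
      linarith
    have hax : a x = 0 := hH0 _ (by linarith)
    have hbx : b x = 1 := hH1 _ (by linarith)
    simp [hψ_def, hEeq, hax, hbx]
  have hψs : HasCompactSupport ψ :=
    HasCompactSupport.intro (isCompact_closedBall h (2*ε)) hψ0
  -- EopV is locally constant near closedBall h ε
  have hElc : ∀ y : EuclideanSpace ℝ (Fin d), y ∈ ball h ((5/4)*ε) → EopV d H ε h φ y = c := by
    intro y hy
    have hyn : ‖y - h‖ < (5/4)*ε := by rw [mem_ball, dist_eq_norm] at hy; exact hy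
    have ht : ‖y - h‖ / ε < 5/4 := by rw [div_lt_iff₀ hε]; linarith
    have ht0 : 0 ≤ ‖y - h‖ / ε := div_nonneg (norm_nonneg _) hε.le
    have hay : a y = 1 := hH1 _ (by linarith)
    have hby : b y = 0 := hH0 _ (by linarith)
    simp [hEeq, hay, hby]
  have hEdiv0 : ∀ x ∈ closedBall h ε, diverg d (EopV d H ε h φ) x = 0 := by
    intro x hx
    have hxb : x ∈ ball h ((5/4)*ε) := by
      rw [mem_closedBall] at hx
      rw [mem_ball]
      nlinarith
    have he : (EopV d H ε h φ) =ᶠ[𝓝 x] fun _ => c :=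
      Filter.eventuallyEq_of_mem (isOpen_ball.mem_nhds hxb) hElc
    have : fderiv ℝ (EopV d H ε h φ) x = 0 := by
      rw [he.fderiv_eq, fderiv_fun_const]; rfl
    simp [diverg, this]
  -- pointwise identity for the divergence of ψ
  have hdψ : ∀ x : EuclideanSpace ℝ (Fin d), diverg d ψ x = diverg d φ x - diverg d (EopV d H ε h φ) x := by
    intro x
    have hfd : fderiv ℝ ψ x = fderiv ℝ φ x - fderiv ℝ (EopV d H ε h φ) x :=
      fderiv_sub ((hφ.differentiable one_ne_zero) x) ((hE.differentiable one_ne_zero) x)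
    simp only [diverg, hfd, ContinuousLinearMap.sub_apply]
    rw [← Finset.sum_sub_distrib]
    rfl
  -- div ψ vanishes on closedBall h ε
  have hdψ0in : ∀ x ∈ closedBall h ε, diverg d ψ x = 0 := by
    intro x hx
    rw [hdψ x, hdiv x hx, hEdiv0 x hx, sub_zero]
  -- div ψ vanishes outside closedBall h (2ε)
  have hdψ0out : ∀ x : EuclideanSpace ℝ (Fin d), x ∉ closedBall h (2*ε) → diverg d ψ x = 0 := by
    intro x hx
    have hxt : x ∉ tsupport ψ := by
      intro hmem
      have : tsupport ψ ⊆ closedBall h (2*ε) :=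
        closure_minimal (fun y hy => by
          by_contra hyn
          exact hy (hψ0 y hyn)) Metric.isClosed_closedBall
      exact hx (this hmem)
    have : fderiv ℝ ψ x = 0 := by
      by_contra hne
      exact hxt (support_fderiv_subset ℝ (Function.mem_support.mpr hne))
    simp [diverg, this]
  -- assemble
  have step1 : ∫ x in closedBall h (2*ε) \ closedBall h ε,
      (diverg d φ x - diverg d (EopV d H ε h φ) x)
      = ∫ x in closedBall h (2*ε) \ closedBall h ε, diverg d ψ x :=
    integral_congr_ae (Filter.Eventually.of_forall fun x => (hdψ x).symm)
  rw [step1]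
  have step2 : ∫ x in closedBall h (2*ε) \ closedBall h ε, diverg d ψ x
      = ∫ x, diverg d ψ x := by
    apply setIntegral_eq_integral_of_forall_compl_eq_zero
    intro x hx
    rcases not_and_or.mp (fun hmem : x ∈ closedBall h (2*ε) ∧ x ∉ closedBall h ε =>
      hx ⟨hmem.1, hmem.2⟩) with h1 | h1
    · exact hdψ0out x h1
    · exact hdψ0in x (not_not.mp h1)
  rw [step2]
  exact aux_integral_diverg_eq_zero ψ hψ hψs
end
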